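/- arXiv:2407.20971 — 3 statements merged into one kernel-verified Lean document; each statement's English description precedes it below -/
import Mathlib

section
/- Let Ω ⊆ ℝ^N be a bounded open set with d(x) := dist(x, ∂Ω), let α ∈ (0,1), and set β := α/(α+1). Assume there exist δ ∈ (0,1), a Lipschitz map Π from Ω_δ := {x ∈ Ω : d(x) < δ} to ∂Ω, and a Lipschitz map ν : ∂Ω → ℝ^N with |ν(z)| = 1 for all z ∈ ∂Ω, such that for every x ∈ Ω_δ: d(x) = |x − Π(x)|, x − Π(x) = −d(x)·ν(Π(x)), and the half-open segment (Π(x), x] is contained in Ω. Let u : ℝ^N → ℝ be continuously differentiable on a neighborhood of the closure of Ω, with u = 0 on ∂Ω, and suppose its gradient ∇u is α-Hölder continuous on the closure of Ω with Hölder constant H. Define ‖u‖_{C^{1,α}} := sup_{closure Ω} |u| + sup_{closure Ω} |∇u| + H. Then there exists a constant C > 0, depending only on Ω, δ, α, and the Lipschitz constants of Π and ν (but not on u), such that |u(x)/d(x) − u(y)/d(y)| ≤ C ‖u‖_{C^{1,α}} |x − y|^β for all x, y ∈ Ω. -/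
/-!
Write `r = ‖x - y‖` and `ρ = r ^ (1 / (α + 1))`, so that `r / ρ = ρ ^ α = r ^ β`.
Since `u` vanishes on `∂Ω`, the mean value inequality along the segment from `Π x` bounds
`|u x / d x|` by `‖u‖_{C^{1,α}} / δ`, which handles `ρ ≥ δ / 2`. If `ρ ≤ d y ≤ d x`, the ball of
radius `d y` around `y` lies in `Ω` and contains `x`, and `u / d` is Lipschitz there with
constant `O(1 / d x) = O(1 / ρ)`. If `d y < ρ`, both points lie in the collar, where the Taylor
expansion of `u` along the normal segment gives `u z / d z = -Du(Π z) (ν (Π z)) + O(d z ^ α)`,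
and this boundary trace is `α`-Hölder in `z` because `Du` is `α`-Hölder and `Π`, `ν` are
Lipschitz.
-/

open Set

lemma IsCompact.le_biSup_of_continuousOn {X : Type*} [TopologicalSpace X] {s : Set X}
    (hs : IsCompact s) {f : X → ℝ} (hf : ContinuousOn f s) {z : X} (hz : z ∈ s) :
    f z ≤ ⨆ w ∈ s, f w :=
  le_ciSup₂ (f := fun w (_ : w ∈ s) => f w)
    (by convert hs.bddAbove_image hf using 1; ext; simp [and_comm]) z hz

lemma IsOpen.infDist_frontier_pos {X : Type*} [PseudoMetricSpace X] {Ω : Set X}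
    (hΩ : IsOpen Ω) (hfr : (frontier Ω).Nonempty) {x : X} (hx : x ∈ Ω) :
    0 < Metric.infDist x (frontier Ω) := by
  rw [← isClosed_frontier.notMem_iff_infDist_pos hfr, hΩ.frontier_eq]
  exact fun h => h.2 hx

lemma frontier_nonempty_of_collar {X : Type*} [PseudoMetricSpace X] {Ω : Set X}
    {d : X → ℝ} (hd : ∀ x, d x = Metric.infDist x (frontier Ω)) {δ : ℝ} (hδ : 0 < δ) {Pr : X → X}
    (hPrMem : ∀ x ∈ {x ∈ Ω | d x < δ}, Pr x ∈ frontier Ω) (hΩ : Ω.Nonempty) :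
    (frontier Ω).Nonempty := by
  obtain ⟨x, hx⟩ := hΩ
  by_contra hempty
  rw [not_nonempty_iff_eq_empty] at hempty
  have hxδ : d x < δ := by rwa [hd, hempty, Metric.infDist_empty]
  simpa [hempty] using hPrMem x ⟨hx, hxδ⟩

section Normed

variable {E : Type*} [NormedAddCommGroup E] [NormedSpace ℝ E]

lemma ContinuousLinearMap.norm_apply_sub_apply_le {F : Type*} [NormedAddCommGroup F]
    [NormedSpace ℝ F] (A B : E →L[ℝ] F) (v w : E) :
    ‖A v - B w‖ ≤ ‖A - B‖ * ‖v‖ + ‖B‖ * ‖v - w‖ := by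
  have hsplit : A v - B w = (A - B) v + B (v - w) := by simp
  rw [hsplit]
  exact (norm_add_le _ _).trans (add_le_add ((A - B).le_opNorm v) (B.le_opNorm _))

lemma segment_subset_closure_of_forall_Ioc {Ω : Set E} {p x : E} (hp : p ∈ closure Ω)
    (h : ∀ t ∈ Ioc (0 : ℝ) 1, p + t • (x - p) ∈ Ω) : segment ℝ p x ⊆ closure Ω := by
  rw [segment_eq_image']
  rintro _ ⟨t, ⟨ht0, ht1⟩, rfl⟩
  rcases ht0.eq_or_lt with rfl | ht0
  · simpa using hp
  · exact subset_closure (h t ⟨ht0, ht1⟩)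

lemma Metric.ball_infDist_frontier_subset [FiniteDimensional ℝ E] {Ω : Set E} {x : E}
    (hx : x ∈ Ω) : ball x (infDist x (frontier Ω)) ⊆ Ω := by
  rcases eq_or_ne Ω univ with rfl | hΩ
  · exact subset_univ _
  obtain ⟨z, hz, hxz⟩ := exists_mem_frontier_infDist_compl_eq_dist hx hΩ
  exact (ball_subset_ball ((infDist_le_dist_of_mem hz).trans_eq hxz.symm)).trans
    ball_infDist_compl_subset

variable {K : Set E} {u : E → ℝ}

lemma abs_sub_le_of_segment_subset {S : ℝ} (hu : ∀ z ∈ K, DifferentiableAt ℝ u z)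
    (hS : ∀ z ∈ K, ‖fderiv ℝ u z‖ ≤ S) {x y : E} (hseg : segment ℝ y x ⊆ K) :
    |u x - u y| ≤ S * ‖x - y‖ :=
  (convex_segment y x).norm_image_sub_le_of_norm_fderiv_le (fun z hz => hu z (hseg hz))
    (fun z hz => hS z (hseg hz)) (left_mem_segment ℝ y x) (right_mem_segment ℝ y x)

lemma abs_div_sub_div_le {d : E → ℝ} {A S : ℝ} {x y : E}
    (hu : ∀ z ∈ K, DifferentiableAt ℝ u z) (hS : ∀ z ∈ K, ‖fderiv ℝ u z‖ ≤ S)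
    (hseg : segment ℝ y x ⊆ K) (huy : |u y| ≤ A * d y) (hd : |d x - d y| ≤ ‖x - y‖)
    (hdx : 0 < d x) (hdy : 0 < d y) :
    |u x / d x - u y / d y| ≤ (S + A) * ‖x - y‖ / d x := by
  have hsplit : u x / d x - u y / d y = ((u x - u y) + u y / d y * (d y - d x)) / d x := by
    field_simp
    ring
  have hquot : |u y / d y| ≤ A := by rwa [abs_div, abs_of_pos hdy, div_le_iff₀ hdy]
  rw [hsplit, abs_div, abs_of_pos hdx]
  gcongr
  calc |u x - u y + u y / d y * (d y - d x)|
      ≤ |u x - u y| + |u y / d y| * |d y - d x| := by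
        rw [← abs_mul]; exact abs_add_le _ _
    _ ≤ S * ‖x - y‖ + A * ‖x - y‖ := by
        gcongr
        · exact abs_sub_le_of_segment_subset hu hS hseg
        · exact (abs_nonneg _).trans hquot
        · rwa [abs_sub_comm]
    _ = (S + A) * ‖x - y‖ := by ring

lemma abs_div_sub_div_le_of_dist_lt [FiniteDimensional ℝ E] {Ω : Set E} {d : E → ℝ}
    (hd : ∀ x, d x = Metric.infDist x (frontier Ω)) {A S : ℝ}
    (hu : ∀ z ∈ closure Ω, DifferentiableAt ℝ u z) (hS : ∀ z ∈ closure Ω, ‖fderiv ℝ u z‖ ≤ S)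
    (hA : ∀ z ∈ Ω, |u z| ≤ A * d z) (hdpos : ∀ z ∈ Ω, 0 < d z) {x y : E} (hx : x ∈ Ω)
    (hy : y ∈ Ω) (hxy : dist x y < d y) :
    |u x / d x - u y / d y| ≤ (S + A) * dist x y / d x := by
  have hseg : segment ℝ y x ⊆ closure Ω :=
    ((convex_ball y (d y)).segment_subset (Metric.mem_ball_self (hdpos y hy))
      (Metric.mem_ball.2 hxy)).trans
      ((hd y ▸ Metric.ball_infDist_frontier_subset hy).trans subset_closure)
  have hdxy : |d x - d y| ≤ ‖x - y‖ := by
    simpa [hd, Real.dist_eq, dist_eq_norm] using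
      (Metric.lipschitz_infDist_pt (frontier Ω)).dist_le_mul x y
  rw [dist_eq_norm]
  exact abs_div_sub_div_le hu hS hseg (hA y hy) hdxy (hdpos x hx) (hdpos y hy)

lemma abs_div_add_fderiv_apply_le {H α t : ℝ} {p x v : E} (hα : 0 ≤ α) (hH : 0 ≤ H)
    (hu : ∀ z ∈ K, DifferentiableAt ℝ u z)
    (hHold : ∀ z ∈ K, ‖fderiv ℝ u z - fderiv ℝ u p‖ ≤ H * ‖z - p‖ ^ α)
    (hseg : segment ℝ p x ⊆ K) (hp : u p = 0) (ht : 0 < t) (hxp : ‖x - p‖ = t)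
    (hdir : x - p = -t • v) :
    |u x / t + fderiv ℝ u p v| ≤ H * t ^ α := by
  have hDu : ∀ z ∈ segment ℝ p x, ‖fderiv ℝ u z - fderiv ℝ u p‖ ≤ H * t ^ α := by
    intro z hz
    refine (hHold z (hseg hz)).trans ?_
    gcongr
    exact hxp ▸ norm_sub_le_of_mem_segment hz
  have htaylor := (convex_segment p x).norm_image_sub_le_of_norm_fderiv_le'
    (fun z hz => hu z (hseg hz)) hDu (left_mem_segment ℝ p x) (right_mem_segment ℝ p x)
  rw [hp, hxp, hdir, map_smul, smul_eq_mul, Real.norm_eq_abs] at htaylor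
  have hquot : u x / t + fderiv ℝ u p v = (u x - 0 - -t * fderiv ℝ u p v) / t := by
    field_simp
    ring
  rw [hquot, abs_div, abs_of_pos ht, div_le_iff₀ ht]
  exact htaylor

lemma abs_le_mul_of_collar {Ω : Set E} {d : E → ℝ} {Pr : E → E} {δ S₁ S₂ : ℝ} (hδ : 0 < δ)
    (hu : ∀ z ∈ closure Ω, DifferentiableAt ℝ u z)
    (hS₁ : ∀ z ∈ closure Ω, |u z| ≤ S₁) (hS₂ : ∀ z ∈ closure Ω, ‖fderiv ℝ u z‖ ≤ S₂)
    (hu0 : ∀ z ∈ frontier Ω, u z = 0)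
    (hPrMem : ∀ x ∈ {x ∈ Ω | d x < δ}, Pr x ∈ frontier Ω)
    (hdist : ∀ x ∈ {x ∈ Ω | d x < δ}, d x = ‖x - Pr x‖)
    (hseg : ∀ x ∈ {x ∈ Ω | d x < δ}, segment ℝ (Pr x) x ⊆ closure Ω)
    {x : E} (hx : x ∈ Ω) : |u x| ≤ (S₁ / δ + S₂) * d x := by
  have hxK : x ∈ closure Ω := subset_closure hx
  have hS₁0 : 0 ≤ S₁ := (abs_nonneg _).trans (hS₁ x hxK)
  have hS₂0 : 0 ≤ S₂ := (norm_nonneg _).trans (hS₂ x hxK)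
  by_cases hxδ : d x < δ
  · have hxc : x ∈ {x ∈ Ω | d x < δ} := ⟨hx, hxδ⟩
    have hdx : 0 ≤ d x := (hdist x hxc).symm ▸ norm_nonneg _
    calc |u x| = |u x - u (Pr x)| := by rw [hu0 _ (hPrMem x hxc), sub_zero]
      _ ≤ S₂ * d x := hdist x hxc ▸ abs_sub_le_of_segment_subset hu hS₂ (hseg x hxc)
      _ ≤ (S₁ / δ + S₂) * d x := by gcongr; exact le_add_of_nonneg_left (by positivity)
  · push Not at hxδ
    calc |u x| ≤ S₁ / δ * δ := by rw [div_mul_cancel₀ _ hδ.ne']; exact hS₁ x hxK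
      _ ≤ S₁ / δ * d x := by gcongr
      _ ≤ (S₁ / δ + S₂) * d x := by
          rw [add_mul]; linarith [mul_nonneg hS₂0 (hδ.le.trans hxδ)]

lemma abs_fderiv_apply_sub_le {s T : Set E} {Pr ν : E → E} {LPr Lν : NNReal} {H α S : ℝ}
    (hα : 0 ≤ α) (hH : 0 ≤ H)
    (hHold : ∀ p ∈ T, ∀ p' ∈ T, ‖fderiv ℝ u p - fderiv ℝ u p'‖ ≤ H * ‖p - p'‖ ^ α)
    (hS : ∀ p ∈ T, ‖fderiv ℝ u p‖ ≤ S)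
    (hPrLip : LipschitzOnWith LPr Pr s) (hPrMem : ∀ x ∈ s, Pr x ∈ T)
    (hνLip : LipschitzOnWith Lν ν T) (hνUnit : ∀ p ∈ T, ‖ν p‖ = 1)
    {x y : E} (hx : x ∈ s) (hy : y ∈ s) :
    |fderiv ℝ u (Pr x) (ν (Pr x)) - fderiv ℝ u (Pr y) (ν (Pr y))| ≤
      H * LPr ^ α * ‖x - y‖ ^ α + S * Lν * LPr * ‖x - y‖ := by
  have hS0 : 0 ≤ S := (norm_nonneg _).trans (hS _ (hPrMem y hy))
  have hPr : ‖Pr x - Pr y‖ ≤ LPr * ‖x - y‖ := by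
    simpa [dist_eq_norm] using hPrLip.dist_le_mul x hx y hy
  have hν : ‖ν (Pr x) - ν (Pr y)‖ ≤ Lν * ‖Pr x - Pr y‖ := by
    simpa [dist_eq_norm] using hνLip.dist_le_mul _ (hPrMem x hx) _ (hPrMem y hy)
  rw [← Real.norm_eq_abs]
  calc _ ≤ ‖fderiv ℝ u (Pr x) - fderiv ℝ u (Pr y)‖ * ‖ν (Pr x)‖
        + ‖fderiv ℝ u (Pr y)‖ * ‖ν (Pr x) - ν (Pr y)‖ :=
        ContinuousLinearMap.norm_apply_sub_apply_le _ _ _ _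
    _ ≤ H * ‖Pr x - Pr y‖ ^ α * 1 + S * (Lν * ‖Pr x - Pr y‖) := by
        rw [hνUnit _ (hPrMem x hx)]
        gcongr
        exacts [hHold _ (hPrMem x hx) _ (hPrMem y hy), hS _ (hPrMem y hy)]
    _ ≤ H * (LPr * ‖x - y‖) ^ α * 1 + S * (Lν * (LPr * ‖x - y‖)) := by gcongr
    _ = H * LPr ^ α * ‖x - y‖ ^ α + S * Lν * LPr * ‖x - y‖ := by
        rw [Real.mul_rpow (by positivity) (by positivity)]; ring

end Normed

section Interpolation

variable {X : Type*} [MetricSpace X] {Ω : Set X} {d q g : X → ℝ} {α δ K : ℝ}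

lemma abs_sub_le_of_lt_of_collar (hα : α ∈ Ioo (0 : ℝ) 1) (hK : 0 ≤ K)
    (hd0 : ∀ x ∈ Ω, 0 ≤ d x) (hdlip : LipschitzWith 1 d)
    (hbdry : ∀ x ∈ Ω, d x < δ → |q x - g x| ≤ K * d x ^ α)
    (hg : ∀ x ∈ Ω, ∀ y ∈ Ω, d x < δ → d y < δ →
      |g x - g y| ≤ K * (dist x y ^ α + dist x y))
    {x y : X} (hx : x ∈ Ω) (hy : y ∈ Ω) {ρ : ℝ} (hρδ : 2 * ρ < δ) (hdy : d y < ρ)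
    (hrρ : dist x y ≤ ρ) (hrρα : dist x y ≤ ρ ^ α) :
    |q x - q y| ≤ 5 * K * ρ ^ α := by
  obtain ⟨hα0, hα1⟩ := hα
  have hρ : 0 ≤ ρ := (hd0 y hy).trans hdy.le
  have hdx : d x < 2 * ρ := by
    have := hdlip.dist_le_mul x y
    rw [NNReal.coe_one, one_mul, Real.dist_eq] at this
    linarith [le_abs_self (d x - d y)]
  have hxδ : d x < δ := hdx.trans hρδ
  have hyδ : d y < δ := by linarith [hd0 y hy]
  have h1 : d x ^ α ≤ 2 * ρ ^ α := by
    calc d x ^ α ≤ (2 * ρ) ^ α := Real.rpow_le_rpow (hd0 x hx) hdx.le hα0.le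
      _ = 2 ^ α * ρ ^ α := Real.mul_rpow zero_le_two hρ
      _ ≤ 2 * ρ ^ α := mul_le_mul_of_nonneg_right
          (by simpa using Real.rpow_le_rpow_of_exponent_le one_le_two hα1.le)
          (Real.rpow_nonneg hρ α)
  have h2 : d y ^ α ≤ ρ ^ α := Real.rpow_le_rpow (hd0 y hy) hdy.le hα0.le
  have h3 : dist x y ^ α ≤ ρ ^ α := Real.rpow_le_rpow dist_nonneg hrρ hα0.le
  calc |q x - q y| ≤ |q x - g x| + |g x - g y| + |q y - g y| := by
        have := abs_sub_le (q x) (g x) (q y)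
        have := abs_sub_le (g x) (g y) (q y)
        rw [abs_sub_comm (g y)] at this
        linarith
    _ ≤ K * d x ^ α + K * (dist x y ^ α + dist x y) + K * d y ^ α := by
        gcongr
        exacts [hbdry x hx hxδ, hg x hx y hy hxδ hyδ, hbdry y hy hyδ]
    _ ≤ K * (2 * ρ ^ α) + K * (ρ ^ α + ρ ^ α) + K * ρ ^ α := by gcongr
    _ = 5 * K * ρ ^ α := by ring

lemma abs_sub_le_mul_rpow_of_dist_eq (hα : α ∈ Ioo (0 : ℝ) 1) (hδ : δ ∈ Ioc (0 : ℝ) 1)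
    (hd0 : ∀ x ∈ Ω, 0 ≤ d x) (hdlip : LipschitzWith 1 d) (hbdd : ∀ x ∈ Ω, |q x| ≤ K)
    (hint : ∀ x ∈ Ω, ∀ y ∈ Ω, dist x y < d y → |q x - q y| ≤ K * dist x y / d x)
    (hbdry : ∀ x ∈ Ω, d x < δ → |q x - g x| ≤ K * d x ^ α)
    (hg : ∀ x ∈ Ω, ∀ y ∈ Ω, d x < δ → d y < δ →
      |g x - g y| ≤ K * (dist x y ^ α + dist x y))
    {x y : X} (hx : x ∈ Ω) (hy : y ∈ Ω) (hxy : d y ≤ d x) {ρ : ℝ} (hρ : 0 < ρ)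
    (hr : dist x y = ρ ^ α * ρ) :
    |q x - q y| ≤ (5 + 2 / (δ / 2) ^ α) * K * ρ ^ α := by
  obtain ⟨hδ0, hδ1⟩ := hδ
  have hK : 0 ≤ K := (abs_nonneg _).trans (hbdd x hx)
  have hρα : 0 < ρ ^ α := Real.rpow_pos_of_pos hρ α
  have hfive : 5 * K * ρ ^ α ≤ (5 + 2 / (δ / 2) ^ α) * K * ρ ^ α := by
    have : 0 ≤ 2 / (δ / 2) ^ α := by positivity
    nlinarith [mul_nonneg hK hρα.le]
  rcases le_or_gt (δ / 2) ρ with hfar | hnear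
  · have hδρ : (δ / 2) ^ α ≤ ρ ^ α := Real.rpow_le_rpow (by positivity) hfar hα.1.le
    calc |q x - q y| ≤ |q x| + |q y| := abs_sub _ _
      _ ≤ 2 / (δ / 2) ^ α * K * (δ / 2) ^ α := by
          rw [mul_right_comm, div_mul_cancel₀ _ (by positivity)]
          linarith [hbdd x hx, hbdd y hy]
      _ ≤ (5 + 2 / (δ / 2) ^ α) * K * ρ ^ α := by gcongr; linarith
  have hρα1 : ρ ^ α < 1 := Real.rpow_lt_one hρ.le (by linarith) hα.1
  have hrρ : dist x y < ρ := hr ▸ mul_lt_of_lt_one_left hρ hρα1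
  have hrρα : dist x y ≤ ρ ^ α := hr ▸ mul_le_of_le_one_right hρα.le (by linarith)
  rcases le_or_gt ρ (d y) with hinner | houter
  · have hdx : 0 < d x := hρ.trans_le (hinner.trans hxy)
    calc |q x - q y| ≤ K * dist x y / d x := hint x hx y hy (hrρ.trans_le hinner)
      _ ≤ K * ρ ^ α := by
          rw [div_le_iff₀ hdx, hr, mul_assoc]
          gcongr
          exact hinner.trans hxy
      _ ≤ _ := by linarith [mul_nonneg hK hρα.le]
  · exact (abs_sub_le_of_lt_of_collar hα hK hd0 hdlip hbdry hg hx hy (by linarith) houter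
      hrρ.le hrρα).trans hfive

theorem abs_sub_le_mul_dist_rpow (hα : α ∈ Ioo (0 : ℝ) 1) (hδ : δ ∈ Ioc (0 : ℝ) 1)
    (hd0 : ∀ x ∈ Ω, 0 ≤ d x) (hdlip : LipschitzWith 1 d) (hbdd : ∀ x ∈ Ω, |q x| ≤ K)
    (hint : ∀ x ∈ Ω, ∀ y ∈ Ω, dist x y < d y → |q x - q y| ≤ K * dist x y / d x)
    (hbdry : ∀ x ∈ Ω, d x < δ → |q x - g x| ≤ K * d x ^ α)
    (hg : ∀ x ∈ Ω, ∀ y ∈ Ω, d x < δ → d y < δ →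
      |g x - g y| ≤ K * (dist x y ^ α + dist x y))
    {x y : X} (hx : x ∈ Ω) (hy : y ∈ Ω) :
    |q x - q y| ≤ (5 + 2 / (δ / 2) ^ α) * K * dist x y ^ (α / (α + 1)) := by
  wlog hxy : d y ≤ d x generalizing x y
  · rw [abs_sub_comm, dist_comm]
    exact this hy hx (le_of_not_ge hxy)
  rcases eq_or_ne x y with rfl | hne
  · rw [sub_self, abs_zero]
    have := (abs_nonneg _).trans (hbdd x hx)
    have := hδ.1
    positivity
  have hα1 : α + 1 ≠ 0 := by linarith [hα.1]
  set ρ := dist x y ^ (α + 1)⁻¹ with hρ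
  have hρ0 : 0 < ρ := Real.rpow_pos_of_pos (dist_pos.2 hne) _
  have hr : dist x y = ρ ^ α * ρ := by
    rw [← Real.rpow_add_one hρ0.ne', Real.rpow_inv_rpow dist_nonneg hα1]
  have hβ : dist x y ^ (α / (α + 1)) = ρ ^ α := by
    rw [hρ, ← Real.rpow_mul dist_nonneg, inv_mul_eq_div]
  rw [hβ]
  exact abs_sub_le_mul_rpow_of_dist_eq hα hδ hd0 hdlip hbdd hint hbdry hg hx hy hxy hρ0 hr

end Interpolation

theorem abs_div_sub_div_le_of_collar {E : Type*} [NormedAddCommGroup E] [NormedSpace ℝ E]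
    [FiniteDimensional ℝ E] {Ω : Set E} (hΩ : IsOpen Ω) {d : E → ℝ}
    (hd : ∀ x, d x = Metric.infDist x (frontier Ω)) {α δ : ℝ} (hα : α ∈ Ioo (0 : ℝ) 1)
    (hδ : δ ∈ Ioc (0 : ℝ) 1) {Pr ν : E → E} {LPr Lν : NNReal}
    (hPrLip : LipschitzOnWith LPr Pr {x ∈ Ω | d x < δ})
    (hPrMem : ∀ x ∈ {x ∈ Ω | d x < δ}, Pr x ∈ frontier Ω)
    (hνLip : LipschitzOnWith Lν ν (frontier Ω))
    (hνUnit : ∀ z ∈ frontier Ω, ‖ν z‖ = 1)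
    (hdist : ∀ x ∈ {x ∈ Ω | d x < δ}, d x = ‖x - Pr x‖)
    (hdir : ∀ x ∈ {x ∈ Ω | d x < δ}, x - Pr x = -(d x) • ν (Pr x))
    (hseg : ∀ x ∈ {x ∈ Ω | d x < δ}, ∀ t ∈ Ioc (0 : ℝ) 1, Pr x + t • (x - Pr x) ∈ Ω)
    {u : E → ℝ} {M : ℝ} (hu : ∀ z ∈ closure Ω, DifferentiableAt ℝ u z)
    (hu0 : ∀ z ∈ frontier Ω, u z = 0) (hM₀ : ∀ z ∈ closure Ω, |u z| ≤ M)
    (hM₁ : ∀ z ∈ closure Ω, ‖fderiv ℝ u z‖ ≤ M)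
    (hHold : ∀ x ∈ closure Ω, ∀ y ∈ closure Ω,
      ‖fderiv ℝ u x - fderiv ℝ u y‖ ≤ M * ‖x - y‖ ^ α)
    {x y : E} (hx : x ∈ Ω) (hy : y ∈ Ω) :
    |u x / d x - u y / d y| ≤ (5 + 2 / (δ / 2) ^ α) * (2 + 1 / δ + LPr ^ α + Lν * LPr) * M *
      ‖x - y‖ ^ (α / (α + 1)) := by
  have hfr := frontier_nonempty_of_collar hd hδ.1 hPrMem ⟨x, hx⟩
  have hdpos : ∀ z ∈ Ω, 0 < d z := fun z hz => hd z ▸ hΩ.infDist_frontier_pos hfr hz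
  have hdlip : LipschitzWith 1 d := by
    simpa only [← funext hd] using Metric.lipschitz_infDist_pt (frontier Ω)
  have hsegK : ∀ z ∈ {x ∈ Ω | d x < δ}, segment ℝ (Pr z) z ⊆ closure Ω := fun z hz =>
    segment_subset_closure_of_forall_Ioc (frontier_subset_closure (hPrMem z hz)) (hseg z hz)
  have hM : 0 ≤ M := (abs_nonneg _).trans (hM₀ x (subset_closure hx))
  have hubdd : ∀ z ∈ Ω, |u z| ≤ (M / δ + M) * d z := fun z hz =>
    abs_le_mul_of_collar hδ.1 hu hM₀ hM₁ hu0 hPrMem hdist hsegK hz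
  set c : ℝ := 2 + 1 / δ + LPr ^ α + Lν * LPr
  have hc : c * M = M / δ + 2 * M + M * LPr ^ α + M * (Lν * LPr) := by simp only [c]; ring
  have hMδ : 0 ≤ M / δ := div_nonneg hM hδ.1.le
  have hMLPr : 0 ≤ M * LPr ^ α := by positivity
  have hMLν : 0 ≤ M * (Lν * LPr) := by positivity
  refine (abs_sub_le_mul_dist_rpow (K := c * M) (q := fun z => u z / d z)
    (g := fun z => -fderiv ℝ u (Pr z) (ν (Pr z))) hα hδ (fun z hz => (hdpos z hz).le) hdlip
    ?_ ?_ ?_ ?_ hx hy).trans_eq (by rw [dist_eq_norm]; ring)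
  · intro z hz
    rw [abs_div, abs_of_pos (hdpos z hz), div_le_iff₀ (hdpos z hz)]
    exact (hubdd z hz).trans (mul_le_mul_of_nonneg_right (by linarith) (hdpos z hz).le)
  · intro z hz w hw hzw
    refine (abs_div_sub_div_le_of_dist_lt hd hu hM₁ hubdd hdpos hz hw hzw).trans ?_
    exact div_le_div_of_nonneg_right (mul_le_mul_of_nonneg_right (by linarith) dist_nonneg)
      (hdpos z hz).le
  · intro z hz hzδ
    have hzc : z ∈ {x ∈ Ω | d x < δ} := ⟨hz, hzδ⟩
    have hPz : Pr z ∈ closure Ω := frontier_subset_closure (hPrMem z hzc)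
    have htaylor := abs_div_add_fderiv_apply_le hα.1.le hM hu (fun w hw => hHold w hw _ hPz)
      (hsegK z hzc) (hu0 _ (hPrMem z hzc)) (hdpos z hz) (hdist z hzc).symm (hdir z hzc)
    simp only [sub_neg_eq_add]
    exact htaylor.trans
      (mul_le_mul_of_nonneg_right (by linarith) (Real.rpow_nonneg (hdpos z hz).le α))
  · intro z hz w hw hzδ hwδ
    have htrace := abs_fderiv_apply_sub_le hα.1.le hM
      (fun p hp p' hp' => hHold p (frontier_subset_closure hp) p' (frontier_subset_closure hp'))
      (fun p hp => hM₁ p (frontier_subset_closure hp)) hPrLip hPrMem hνLip hνUnit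
      ⟨hz, hzδ⟩ ⟨hw, hwδ⟩
    rw [neg_sub_neg, abs_sub_comm, dist_eq_norm]
    refine htrace.trans ?_
    have := Real.rpow_nonneg (norm_nonneg (z - w)) α
    have := norm_nonneg (z - w)
    nlinarith

theorem stmt_3 (N : ℕ) (Ω : Set (EuclideanSpace ℝ (Fin N)))
    (hΩo : IsOpen Ω) (hΩb : Bornology.IsBounded Ω)
    (d : EuclideanSpace ℝ (Fin N) → ℝ)
    (hd : ∀ x, d x = Metric.infDist x (frontier Ω))
    (α : ℝ) (hα : α ∈ Set.Ioo (0 : ℝ) 1) (β : ℝ) (hβ : β = α / (α + 1))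
    (δ : ℝ) (hδ : δ ∈ Set.Ioo (0 : ℝ) 1)
    (Pr ν : EuclideanSpace ℝ (Fin N) → EuclideanSpace ℝ (Fin N))
    (LPr Lν : NNReal)
    (hPrLip : LipschitzOnWith LPr Pr {x ∈ Ω | d x < δ})
    (hPrMem : ∀ x ∈ {x ∈ Ω | d x < δ}, Pr x ∈ frontier Ω)
    (hνLip : LipschitzOnWith Lν ν (frontier Ω))
    (hνUnit : ∀ z ∈ frontier Ω, ‖ν z‖ = 1)
    (hdist : ∀ x ∈ {x ∈ Ω | d x < δ}, d x = ‖x - Pr x‖)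
    (hdir : ∀ x ∈ {x ∈ Ω | d x < δ}, x - Pr x = -(d x) • ν (Pr x))
    (hseg : ∀ x ∈ {x ∈ Ω | d x < δ}, ∀ t ∈ Set.Ioc (0 : ℝ) 1,
      Pr x + t • (x - Pr x) ∈ Ω) :
    ∃ C > 0, ∀ (u : EuclideanSpace ℝ (Fin N) → ℝ)
      (U : Set (EuclideanSpace ℝ (Fin N))) (H : ℝ),
      IsOpen U → closure Ω ⊆ U → ContDiffOn ℝ 1 u U →
      (∀ z ∈ frontier Ω, u z = 0) →
      (∀ x ∈ closure Ω, ∀ y ∈ closure Ω,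
        ‖fderiv ℝ u x - fderiv ℝ u y‖ ≤ H * ‖x - y‖ ^ α) →
      ∀ x ∈ Ω, ∀ y ∈ Ω,
        |u x / d x - u y / d y| ≤
          C * ((⨆ z ∈ closure Ω, |u z|) + (⨆ z ∈ closure Ω, ‖fderiv ℝ u z‖) + H) *
            ‖x - y‖ ^ β := by
  obtain ⟨hδ0, hδ1⟩ := hδ
  refine ⟨(5 + 2 / (δ / 2) ^ α) * (2 + 1 / δ + LPr ^ α + Lν * LPr), by positivity,
    fun u U H hU hUsub hCD hu0 hHold x hx y hy => ?_⟩
  have hK : IsCompact (closure Ω) := hΩb.isCompact_closure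
  have hu : ∀ z ∈ closure Ω, DifferentiableAt ℝ u z := fun z hz =>
    (hCD.differentiableOn one_ne_zero).differentiableAt (hU.mem_nhds (hUsub hz))
  have hS₁ : ∀ z ∈ closure Ω, |u z| ≤ ⨆ w ∈ closure Ω, |u w| := fun z hz =>
    hK.le_biSup_of_continuousOn (hCD.continuousOn.mono hUsub).abs hz
  have hS₂ : ∀ z ∈ closure Ω, ‖fderiv ℝ u z‖ ≤ ⨆ w ∈ closure Ω, ‖fderiv ℝ u w‖ := fun z hz =>
    hK.le_biSup_of_continuousOn
      ((hCD.continuousOn_fderiv_of_isOpen hU le_rfl).mono hUsub).norm hz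
  have hS₁0 := (abs_nonneg _).trans (hS₁ x (subset_closure hx))
  have hS₂0 := (norm_nonneg _).trans (hS₂ x (subset_closure hx))
  obtain ⟨z₀, hz₀⟩ := frontier_nonempty_of_collar hd hδ0 hPrMem ⟨x, hx⟩
  have hxz₀ : x ≠ z₀ := fun h => (hΩo.frontier_eq ▸ hz₀).2 (h ▸ hx)
  have hH : 0 ≤ H := nonneg_of_mul_nonneg_left
    ((norm_nonneg _).trans (hHold x (subset_closure hx) z₀ (frontier_subset_closure hz₀)))
    (Real.rpow_pos_of_pos (norm_sub_pos_iff.2 hxz₀) α)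
  subst hβ
  refine abs_div_sub_div_le_of_collar hΩo hd hα ⟨hδ0, hδ1.le⟩ hPrLip hPrMem hνLip hνUnit hdist
    hdir hseg hu hu0 (fun z hz => ?_) (fun z hz => ?_) (fun z hz w hw => ?_) hx hy
  · linarith [hS₁ z hz]
  · linarith [hS₂ z hz]
  · exact (hHold z hz w hw).trans (by gcongr; linarith)
end

section
/- Let Ω ⊆ ℝ^N be a bounded open set with d(x) := dist(x, ∂Ω), let α ∈ (0,1), and set β := α/(α+1). Let u : ℝ^N → ℝ be Lipschitz continuous on the closure of Ω with Lipschitz constant L and with u = 0 on ∂Ω. Suppose x, y ∈ Ω satisfy 0 < |x − y| < 1, d(y) ≤ d(x), and d(x) > |x − y|^{1/(α+1)}. Then |u(x)/d(x) − u(y)/d(y)| ≤ 2L |x − y|^β. -/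
open MeasureTheory Filter Set

/-!
Split `u x / d x - u y / d y = (u x - u y) / d x + u y (d y - d x) / (d x d y)`. The first
term is at most `L r / d x` with `r = ‖x - y‖`, and so is the second, because `|u y| ≤ L d y`
(as `u` vanishes on `∂Ω`) and `d` is `1`-Lipschitz. Finally `r / d x ≤ r / r ^ (1/(α+1)) = r ^ β`.
-/

theorem LipschitzOnWith.abs_le_mul_infDist {X : Type*} [PseudoMetricSpace X] {f : X → ℝ}
    {K : NNReal} {s t : Set X} (hf : LipschitzOnWith K f s) (hts : t ⊆ s) (ht : t.Nonempty)
    (hft : ∀ z ∈ t, f z = 0) {x : X} (hx : x ∈ s) : |f x| ≤ K * Metric.infDist x t := by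
  rw [Metric.infDist_eq_iInf, Real.mul_iInf_of_nonneg K.coe_nonneg]
  have : Nonempty t := ht.to_subtype
  refine le_ciInf fun z => ?_
  simpa [hft z z.2, Real.dist_eq] using hf.dist_le_mul x hx z (hts z.2)

theorem abs_div_sub_div_le_s4 {a b p q r K : ℝ} (hp : 0 < p) (hq : 0 ≤ q)
    (hab : |a - b| ≤ K * r) (hb : |b| ≤ K * q) (hpq : |p - q| ≤ r) :
    |a / p - b / q| ≤ 2 * K * r / p := by
  have hb_term : |b / p - b / q| ≤ K * r / p := by
    rcases hq.eq_or_lt with rfl | hq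
    · have hb0 : b = 0 := abs_nonpos_iff.mp (by simpa using hb)
      simp [hb0, div_nonneg, (abs_nonneg _).trans hab, hp.le]
    calc |b / p - b / q| = |b| * |p - q| / (p * q) := by
          rw [div_sub_div _ _ hp.ne' hq.ne', abs_div, abs_of_pos (mul_pos hp hq),
            show b * q - p * b = b * (q - p) by ring, abs_mul, abs_sub_comm]
      _ ≤ K * q * r / (p * q) := by
          gcongr
          exact (abs_nonneg _).trans hb
      _ = K * r / p := by field_simp
  calc |a / p - b / q| = |(a - b) / p + (b / p - b / q)| := by ring_nf
    _ ≤ |(a - b) / p| + |b / p - b / q| := abs_add_le _ _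
    _ ≤ K * r / p + K * r / p := by
        rw [abs_div, abs_of_pos hp]
        gcongr
    _ = 2 * K * r / p := by ring

theorem div_le_rpow_one_sub_of_rpow_le {r s d : ℝ} (hr : 0 < r) (hd : r ^ s ≤ d) :
    r / d ≤ r ^ (1 - s) := by
  rw [Real.rpow_sub hr, Real.rpow_one]
  exact div_le_div_of_nonneg_left hr.le (Real.rpow_pos_of_pos hr s) hd

theorem stmt_4_general (N : ℕ) (Ω : Set (EuclideanSpace ℝ (Fin N)))
    (d : EuclideanSpace ℝ (Fin N) → ℝ)
    (hd : ∀ x, d x = Metric.infDist x (frontier Ω))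
    (α β : ℝ) (hα : α ∈ Set.Ioo (0 : ℝ) 1) (hβ : β = α / (α + 1))
    (u : EuclideanSpace ℝ (Fin N) → ℝ) (L : NNReal)
    (hLip : LipschitzOnWith L u (closure Ω))
    (hzero : ∀ z ∈ frontier Ω, u z = 0)
    (x y : EuclideanSpace ℝ (Fin N)) (hx : x ∈ Ω) (hy : y ∈ Ω)
    (hxy0 : 0 < ‖x - y‖)
    (hdx : d x > ‖x - y‖ ^ (1 / (α + 1))) :
    |u x / d x - u y / d y| ≤ 2 * (L : ℝ) * ‖x - y‖ ^ β := by
  have hdx_pos : 0 < d x := (Real.rpow_pos_of_pos hxy0 _).trans hdx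
  have hfr : (frontier Ω).Nonempty := by
    by_contra h
    simp [hd, not_nonempty_iff_eq_empty.mp h] at hdx_pos
  have hux : |u x - u y| ≤ L * ‖x - y‖ := by
    simpa [Real.dist_eq, dist_eq_norm] using
      hLip.dist_le_mul x (subset_closure hx) y (subset_closure hy)
  have huy : |u y| ≤ L * d y := hd y ▸
    hLip.abs_le_mul_infDist frontier_subset_closure hfr hzero (subset_closure hy)
  have hdd : |d x - d y| ≤ ‖x - y‖ := by
    simpa [hd, Real.dist_eq, dist_eq_norm] using
      (Metric.lipschitz_infDist_pt (frontier Ω)).dist_le_mul x y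
  have hβ' : β = 1 - 1 / (α + 1) := by
    rw [hβ]
    field_simp [(show α + 1 ≠ 0 by linarith [hα.1])]
    ring
  calc |u x / d x - u y / d y| ≤ 2 * L * ‖x - y‖ / d x :=
        abs_div_sub_div_le_s4 hdx_pos (hd y ▸ Metric.infDist_nonneg) hux huy hdd
    _ = 2 * L * (‖x - y‖ / d x) := by ring
    _ ≤ 2 * L * ‖x - y‖ ^ β := by
        rw [hβ']
        gcongr
        exact div_le_rpow_one_sub_of_rpow_le hxy0 hdx.le

theorem stmt_4 (N : ℕ) (Ω : Set (EuclideanSpace ℝ (Fin N)))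
    (hΩo : IsOpen Ω) (hΩb : Bornology.IsBounded Ω)
    (d : EuclideanSpace ℝ (Fin N) → ℝ)
    (hd : ∀ x, d x = Metric.infDist x (frontier Ω))
    (α β : ℝ) (hα : α ∈ Set.Ioo (0 : ℝ) 1) (hβ : β = α / (α + 1))
    (u : EuclideanSpace ℝ (Fin N) → ℝ) (L : NNReal)
    (hLip : LipschitzOnWith L u (closure Ω))
    (hzero : ∀ z ∈ frontier Ω, u z = 0)
    (x y : EuclideanSpace ℝ (Fin N)) (hx : x ∈ Ω) (hy : y ∈ Ω)
    (hxy0 : 0 < ‖x - y‖) (hxy1 : ‖x - y‖ < 1)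
    (hdy : d y ≤ d x) (hdx : d x > ‖x - y‖ ^ (1 / (α + 1))) :
    |u x / d x - u y / d y| ≤ 2 * (L : ℝ) * ‖x - y‖ ^ β :=
  stmt_4_general N Ω d hd α β hα hβ u L hLip hzero x y hx hy hxy0 hdx
end

section
/- Let f : ℝ^N → ℝ be Lipschitz continuous and let D ⊆ ℝ be a set of Lebesgue measure zero. Then for almost every x ∈ f⁻¹(D) (with respect to Lebesgue measure on ℝ^N), f is differentiable at x and its total derivative at x is zero. -/
/-!
Replacing the `i`-th coordinate of `x` by `f x` is a map whose Jacobian determinant is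
`∂ᵢ f x` and which sends `f ⁻¹' D` into the null slab `{y | y i ∈ D}`. A map with invertible
derivative cannot shrink a set of positive measure to a null set, so `∂ᵢ f = 0` almost everywhere
on `f ⁻¹' D`, for every `i`. Rademacher's theorem supplies differentiability.
-/

open MeasureTheory Filter Set Topology
open scoped NNReal ENNReal

theorem LinearMap.det_id_add_smulRight {R M : Type*} [CommRing R] [AddCommGroup M] [Module R M]
    [Module.Free R M] [Module.Finite R M] (φ : M →ₗ[R] R) (v : M) :
    (LinearMap.id + φ.smulRight v).det = 1 + φ v := by
  classical
  set b := Module.Free.chooseBasis R M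
  have hM : LinearMap.toMatrix b b (φ.smulRight v) =
      Matrix.replicateCol Unit (b.repr v) * Matrix.replicateRow Unit (fun k => φ (b k)) := by
    ext j k
    simp [LinearMap.toMatrix_apply, Matrix.mul_apply, mul_comm]
  rw [← LinearMap.det_toMatrix b, map_add, LinearMap.toMatrix_id, hM,
    Matrix.det_one_add_replicateCol_mul_replicateRow]
  congr 1
  conv_rhs => rw [← b.sum_repr v]
  simp only [dotProduct, map_sum, map_smul, smul_eq_mul, mul_comm]

theorem ContinuousLinearMap.det_id_add_smulRight {𝕜 E : Type*} [Field 𝕜] [TopologicalSpace 𝕜]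
    [AddCommGroup E] [TopologicalSpace E] [IsTopologicalAddGroup E] [Module 𝕜 E]
    [ContinuousSMul 𝕜 E] [FiniteDimensional 𝕜 E] (φ : E →L[𝕜] 𝕜) (v : E) :
    (ContinuousLinearMap.id 𝕜 E + φ.smulRight v).det = 1 + φ v :=
  LinearMap.det_id_add_smulRight (φ : E →ₗ[𝕜] 𝕜) v

namespace MeasureTheory

variable {E : Type*} [NormedAddCommGroup E] [NormedSpace ℝ E] [FiniteDimensional ℝ E]
  [MeasurableSpace E] [BorelSpace E] (μ : Measure E) [μ.IsAddHaarMeasure]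

theorem eventually_addHaar_eq_zero_of_approximatesLinearOn {A : E →L[ℝ] E} (hA : A.det ≠ 0) :
    ∀ᶠ δ in 𝓝[>] (0 : ℝ≥0), ∀ (t : Set E) (g : E → E),
      ApproximatesLinearOn g A t δ → μ (g '' t) = 0 → μ t = 0 := by
  obtain ⟨m, hm₀, hm⟩ := ENNReal.lt_iff_exists_nnreal_btwn.1
    (ENNReal.ofReal_pos.2 (abs_pos.2 hA))
  filter_upwards [mul_le_addHaar_image_of_lt_det μ A hm] with δ hδ t g hg himg
  have hmt : (m : ℝ≥0∞) * μ t = 0 := le_antisymm ((hδ t g hg).trans himg.le) zero_le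
  exact (mul_eq_zero.1 hmt).resolve_left (ENNReal.coe_ne_zero.2 (by exact_mod_cast hm₀.ne'))

theorem addHaar_eq_zero_of_addHaar_image_eq_zero {F : E → E} {F' : E → E →L[ℝ] E} {s : Set E}
    (hF : ∀ x ∈ s, HasFDerivWithinAt F (F' x) s x) (hdet : ∀ x ∈ s, (F' x).det ≠ 0)
    (himg : μ (F '' s) = 0) : μ s = 0 := by
  rcases s.eq_empty_or_nonempty with rfl | hs
  · exact measure_empty
  have hδ : ∀ A : E →L[ℝ] E, ∃ δ : ℝ≥0, 0 < δ ∧ (A.det ≠ 0 → ∀ (t : Set E) (g : E → E),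
      ApproximatesLinearOn g A t δ → μ (g '' t) = 0 → μ t = 0) := fun A => by
    by_cases hA : A.det = 0
    · exact ⟨1, one_pos, fun h => absurd hA h⟩
    · obtain ⟨δ, hδ, hδ₀⟩ := ((eventually_addHaar_eq_zero_of_approximatesLinearOn μ hA).and
        self_mem_nhdsWithin).exists
      exact ⟨δ, hδ₀, fun _ => hδ⟩
  choose δ hδ₀ hδ using hδ
  obtain ⟨t, A, -, -, hst, hFA, hA⟩ :=
    exists_partition_approximatesLinearOn_of_hasFDerivWithinAt F s F' hF δ fun A => (hδ₀ A).ne'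
  refine measure_mono_null (subset_inter Subset.rfl hst) ?_
  rw [inter_iUnion]
  refine measure_iUnion_null fun n => ?_
  obtain ⟨y, hy, hAy⟩ := hA hs n
  exact hδ (A n) (hAy ▸ hdet y hy) _ F (hFA n)
    (measure_mono_null (image_mono inter_subset_left) himg)

end MeasureTheory

theorem EuclideanSpace.volume_preimage_apply_eq_zero {ι : Type*} [Fintype ι] {D : Set ℝ}
    (hD : volume D = 0) (i : ι) : volume {y : EuclideanSpace ℝ ι | y i ∈ D} = 0 :=
  (EuclideanSpace.volume_preserving_symm_measurableEquiv_toLp ι).quasiMeasurePreserving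
    |>.preimage_null (s := Function.eval i ⁻¹' D)
      (by rw [volume_pi]; exact Measure.pi_eval_preimage_null _ hD)

theorem volume_setOf_fderiv_single_ne_zero_of_mem_null {ι : Type*} [Fintype ι] [DecidableEq ι]
    {f : EuclideanSpace ℝ ι → ℝ} {D : Set ℝ} (hD : volume D = 0) (i : ι) :
    volume {x | DifferentiableAt ℝ f x ∧ f x ∈ D ∧
      fderiv ℝ f x (EuclideanSpace.single i 1) ≠ 0} = 0 := by
  set e : EuclideanSpace ℝ ι := EuclideanSpace.single i 1
  refine addHaar_eq_zero_of_addHaar_image_eq_zero volume (F := fun x => x + (f x - x i) • e)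
    (F' := fun x =>
      ContinuousLinearMap.id ℝ _ + (fderiv ℝ f x - EuclideanSpace.proj i).smulRight e)
    (fun x hx => ?_) (fun x hx => ?_) ?_
  · exact ((hasFDerivAt_id x).add ((hx.1.hasFDerivAt.sub
      (EuclideanSpace.proj i).hasFDerivAt).smul_const e)).hasFDerivWithinAt
  · simpa [ContinuousLinearMap.det_id_add_smulRight, e] using hx.2.2
  · refine measure_mono_null ?_ (EuclideanSpace.volume_preimage_apply_eq_zero hD i)
    rintro _ ⟨x, hx, rfl⟩
    simpa [e] using hx.2.1

theorem ae_fderiv_eq_zero_of_mem_null {ι : Type*} [Fintype ι] {f : EuclideanSpace ℝ ι → ℝ}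
    {D : Set ℝ} (hD : volume D = 0) :
    ∀ᵐ x, DifferentiableAt ℝ f x → f x ∈ D → fderiv ℝ f x = 0 := by
  classical
  have hpartial : ∀ i, ∀ᵐ x, DifferentiableAt ℝ f x → f x ∈ D →
      fderiv ℝ f x (EuclideanSpace.single i 1) = 0 := fun i => by
    simpa only [ae_iff, Classical.not_imp, ne_eq] using
      volume_setOf_fderiv_single_ne_zero_of_mem_null (f := f) hD i
  filter_upwards [ae_all_iff.2 hpartial] with x hx hdiff hxD
  refine ContinuousLinearMap.coe_injective <|
    (EuclideanSpace.basisFun ι ℝ).toBasis.ext fun i => ?_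
  simpa using hx i hdiff hxD

theorem stmt_7 (N : ℕ) (f : EuclideanSpace ℝ (Fin N) → ℝ) (K : NNReal)
    (hf : LipschitzWith K f) (D : Set ℝ) (hD : volume D = 0) :
    ∀ᵐ x ∂(volume.restrict (f ⁻¹' D)),
      DifferentiableAt ℝ f x ∧ fderiv ℝ f x = 0 := by
  have hmeas : MeasurableSet {x | DifferentiableAt ℝ f x ∧ fderiv ℝ f x = 0} :=
    (measurableSet_of_differentiableAt ℝ f).inter
      (measurable_fderiv ℝ f (measurableSet_singleton 0))
  rw [ae_restrict_iff hmeas]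
  filter_upwards [hf.ae_differentiableAt, ae_fderiv_eq_zero_of_mem_null hD] with x hdiff hzero hxD
  exact ⟨hdiff, hzero hdiff hxD⟩
end
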